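/- Define row-sum matrices R_i = Σ_{j≠i} L_{ij} for the n×n elementary rate matrices L_{ij} = E_{ij} - E_{jj}. Then [R_i, R_j] = R_i - R_j for all i, j; hence the span of {R_1,...,R_n} (the Felsenstein 81 model) is a Lie algebra. -/

import Mathlib

open Matrix

/-
Write `S i` for the matrix whose `i`-th row is all ones and whose other rows vanish, i.e.
`S i = vecMulVec (Pi.single i 1) 1`. Then `R i = S i - 1`, and `S i * S j = S i` because the
column sums of `S j` are all `1`. Hence `[R i, R j] = [S i, S j] = S i - S j = R i - R j`, and
since the commutator is bilinear, the span of the `R i` is closed under it.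
-/

/-- Elementary rate matrices `L i j = E i j - E j j`. -/
def Lmat {n : ℕ} (i j : Fin n) : Matrix (Fin n) (Fin n) ℂ :=
  Matrix.single i j 1 - Matrix.single j j 1

/-- Row-sum matrices `R i = ∑_{j ≠ i} L i j`. -/
noncomputable def Rmat {n : ℕ} (i : Fin n) : Matrix (Fin n) (Fin n) ℂ :=
  ∑ j ∈ Finset.univ.erase i, Lmat i j

theorem Submodule.apply_mem_span_of_apply_mem_span {R M : Type*} [CommSemiring R]
    [AddCommMonoid M] [Module R M] (f : M →ₗ[R] M →ₗ[R] M) {s : Set M}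
    (hs : ∀ x ∈ s, ∀ y ∈ s, f x y ∈ span R s) {x y : M} (hx : x ∈ span R s)
    (hy : y ∈ span R s) : f x y ∈ span R s := by
  have hf : map₂ f (span R s) (span R s) ≤ span R s := by
    rw [map₂_span_span, span_le]
    rintro _ ⟨x, hx, y, hy, rfl⟩
    exact hs x hx y hy
  exact map₂_le.mp hf x hx y hy

section

variable {n α : Type*} [Fintype n] [DecidableEq n] [Semiring α]

theorem Matrix.sum_single_one_eq_vecMulVec (i : n) :
    ∑ j, single i j (1 : α) = vecMulVec (Pi.single i 1) (1 : n → α) := by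
  ext a b
  rcases eq_or_ne i a with rfl | h <;> simp [sum_apply, single_apply, vecMulVec_apply, *]

theorem Matrix.vecMulVec_one_mul_vecMulVec_single_one (u : n → α) (j : n) :
    vecMulVec u (1 : n → α) * vecMulVec (Pi.single j 1) 1 = vecMulVec u 1 := by
  rw [vecMulVec_mul_vecMulVec]
  simp

end

lemma Rmat_eq_vecMulVec_sub_one {n : ℕ} (i : Fin n) :
    Rmat i = vecMulVec (Pi.single i 1) 1 - 1 := by
  rw [Rmat, Finset.sum_erase _ (sub_self _)]
  simp only [Lmat, Finset.sum_sub_distrib, sum_single_one_eq_vecMulVec,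
    sum_single_eq_diagonal (fun _ => (1 : ℂ)), diagonal_one]

lemma Rmat_commutator {n : ℕ} (i j : Fin n) :
    Rmat i * Rmat j - Rmat j * Rmat i = Rmat i - Rmat j := by
  simp only [Rmat_eq_vecMulVec_sub_one, sub_mul, mul_sub, mul_one, one_mul,
    vecMulVec_one_mul_vecMulVec_single_one]
  abel

theorem felsenstein81_is_lie_algebra {n : ℕ} :
    (∀ i j : Fin n, Rmat i * Rmat j - Rmat j * Rmat i = Rmat i - Rmat j) ∧
    ∀ X ∈ Submodule.span ℂ (Set.range (Rmat (n := n))),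
      ∀ Y ∈ Submodule.span ℂ (Set.range (Rmat (n := n))),
        X * Y - Y * X ∈ Submodule.span ℂ (Set.range (Rmat (n := n))) := by
  refine ⟨Rmat_commutator, fun X hX Y hY => ?_⟩
  let commutator := LinearMap.mul ℂ (Matrix (Fin n) (Fin n) ℂ) - (LinearMap.mul ℂ _).flip
  refine Submodule.apply_mem_span_of_apply_mem_span commutator ?_ hX hY
  rintro _ ⟨i, rfl⟩ _ ⟨j, rfl⟩
  simp only [commutator, LinearMap.sub_apply, LinearMap.flip_apply, LinearMap.mul_apply',
    Rmat_commutator]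
  exact sub_mem (Submodule.subset_span ⟨i, rfl⟩) (Submodule.subset_span ⟨j, rfl⟩)
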